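/- arXiv:math/9803144 — 2 statements merged into one kernel-verified Lean document; each statement's English description precedes it below -/
import Mathlib

section
/- Let $G$ be a subgroup of $\mathfrak{S}_{N_1} \times \mathfrak{S}_{N_2}$ with $N_1, N_2 > 2$, such that both projections $p_i : G \to \mathfrak{S}_{N_i}$ are surjective and $G$ contains the element $((1\,2), (1\,2))$. If the stabilizer in $G$ of the point $(1,1) \in \{1,\dots,N_1\} \times \{1,\dots,N_2\}$ has index strictly less than $N_1 N_2$ in $G$, then $N_1 = N_2$ and $G$ is conjugate (by an inner automorphism of one factor) to the diagonal subgroup $\Delta \subset \mathfrak{S}_N \times \mathfrak{S}_N$. -/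
/-!
Both projections of `G` are injective: the image under one projection of the kernel of the other
is normal in a symmetric group, so if it were nontrivial it would be transitive, `G` would be
transitive on the product, and the stabilizer of `(1,1)` would have index `N₁ N₂`. Hence `G` is
the graph of an isomorphism `𝔖_{N₁} ≃* 𝔖_{N₂}`, so `N₁ = N₂`. This automorphism fixes one
transposition, hence maps the conjugacy class of transpositions to itself, and such an
automorphism is inner.
-/

open Equiv Equiv.Perm MulAction Function

namespace Equiv.Perm

variable {α : Type*}

theorem isPretransitive_of_normal {N : Subgroup (Perm α)} [N.Normal] (hN : N ≠ ⊥) :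
    IsPretransitive N α := by
  apply IsQuasiPreprimitive.isPretransitive_of_normal
  obtain ⟨n, hn⟩ := Subgroup.ne_bot_iff_exists_ne_one.mp hN
  obtain ⟨x, hx⟩ : ∃ x, (n : Perm α) x ≠ x := by
    by_contra! h
    exact hn (Subtype.ext (Equiv.ext h))
  exact fun h => hx ((mem_fixedPoints.mp (h ▸ Set.mem_univ x)) n)

theorem exists_apply_ne_of_not_commute {s t : Perm α} (h : ¬Commute s t) :
    ∃ z, s z ≠ z ∧ t z ≠ z := by
  by_contra! hst
  exact h (Disjoint.commute fun z => (em (s z = z)).imp_right (hst z))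

variable [DecidableEq α]

theorem IsSwap.eq_swap_apply {s : Perm α} (hs : s.IsSwap) {x : α} (hx : s x ≠ x) :
    s = swap x (s x) := by
  obtain ⟨u, v, -, rfl⟩ := hs
  rcases (swap_apply_ne_self_iff.mp hx).2 with rfl | rfl
  · rw [swap_apply_left]
  · rw [swap_apply_right, swap_comm]

theorem IsSwap.eq_swap_of_apply_ne {s : Perm α} (hs : s.IsSwap) {x z : α} (hx : s x ≠ x)
    (hz : s z ≠ z) (hzx : z ≠ x) : s = swap x z := by
  rw [hs.eq_swap_apply hx] at hz ⊢
  rcases (swap_apply_ne_self_iff.mp hz).2 with rfl | rfl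
  exacts [absurd rfl hzx, rfl]

theorem not_commute_swap_swap {a i j : α} (hi : i ≠ a) (hj : j ≠ a) (hij : i ≠ j) :
    ¬Commute (swap a i) (swap a j) := fun h => by
  have := congrArg (· i) h.eq
  simp only [Perm.mul_apply, swap_apply_right, swap_apply_left,
    swap_apply_of_ne_of_ne hi hij] at this
  exact hj this.symm

theorem isSwap_map_of_isSwap_map_swap (φ : Perm α ≃* Perm α) {a b : α} (hab : a ≠ b)
    (hφ : (φ (swap a b)).IsSwap) {s : Perm α} (hs : s.IsSwap) : (φ s).IsSwap := by
  obtain ⟨x, y, hxy, rfl⟩ := hs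
  obtain ⟨c, hc⟩ := isConj_iff.mp (φ.toMonoidHom.map_isConj (isConj_swap hab hxy))
  obtain ⟨u, v, huv, hφuv⟩ := hφ
  refine ⟨c u, c v, c.injective.ne huv, ?_⟩
  rw [MulEquiv.coe_toMonoidHom] at hc
  rw [← hc, hφuv, swap_apply_apply]

theorem monoidHom_ext_swap [Finite α] {M : Type*} [Group M] {f g : Perm α →* M} (a : α)
    (h : ∀ i, f (swap a i) = g (swap a i)) : f = g := by
  refine MonoidHom.eq_of_eqOn_dense closure_isSwap ?_
  rintro _ ⟨x, y, hxy, rfl⟩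
  rcases eq_or_ne x a with hx | hx
  · exact hx ▸ h y
  rcases eq_or_ne y a with hy | hy
  · exact hy ▸ swap_comm a x ▸ h x
  have hxy' : swap x y = swap a x * swap a y * (swap a x)⁻¹ := by
    rw [← swap_apply_apply, swap_apply_left, swap_apply_of_ne_of_ne hy hxy.symm]
  rw [hxy', map_mul, map_mul, map_inv, map_mul, map_mul, map_inv, h x, h y]

section SwapPreserving

variable (φ : Perm α ≃* Perm α) (hφ : ∀ s : Perm α, s.IsSwap → (φ s).IsSwap)
include hφ

/-- The images of the star transpositions `swap a i` pairwise do not commute, so pairwise share a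
moved point. If no point were common to all of them, two would form a triangle with a third one,
`swap q z`, `swap p z` and `swap p q`, and conjugating one by another would give
`φ (swap j i) = φ (swap a i₀)`. -/
theorem exists_forall_map_swap_apply_ne (a : α) : ∃ c, ∀ i ≠ a, φ (swap a i) c ≠ c := by
  by_cases hα : ∀ i, i = a
  · exact ⟨a, fun i hi => absurd (hα i) hi⟩
  push Not at hα
  obtain ⟨i₀, hi₀⟩ := hα
  have hmeet : ∀ i j, i ≠ a → j ≠ a → i ≠ j → ∃ z, φ (swap a i) z ≠ z ∧ φ (swap a j) z ≠ z :=
    fun i j hi hj hij => exists_apply_ne_of_not_commute fun h =>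
      not_commute_swap_swap hi hj hij (by simpa using h.map φ.symm)
  obtain ⟨p, q, hpq, hp⟩ := hφ _ (swap_isSwap_iff.mpr hi₀.symm)
  have hpq_meet : ∀ i ≠ a, φ (swap a i) p ≠ p ∨ φ (swap a i) q ≠ q := by
    intro i hi
    rcases eq_or_ne i i₀ with rfl | hii₀
    · rw [hp, swap_apply_left]
      exact Or.inl hpq.symm
    obtain ⟨z, hz, hz₀⟩ := hmeet i i₀ hi hi₀ hii₀
    rw [hp] at hz₀
    rcases (swap_apply_ne_self_iff.mp hz₀).2 with rfl | rfl
    exacts [Or.inl hz, Or.inr hz]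
  by_contra! hno
  obtain ⟨i, hi, hip⟩ := hno p
  obtain ⟨j, hj, hjq⟩ := hno q
  have hiq := (hpq_meet i hi).resolve_left (not_not.mpr hip)
  have hjp := (hpq_meet j hj).resolve_right (not_not.mpr hjq)
  have hij : i ≠ j := by rintro rfl; exact hjp hip
  obtain ⟨z, hzi, hzj⟩ := hmeet i j hi hj hij
  have hzp : z ≠ p := by rintro rfl; exact hzi hip
  have hzq : z ≠ q := by rintro rfl; exact hzj hjq
  have hti := (hφ _ (swap_isSwap_iff.mpr hi.symm)).eq_swap_of_apply_ne hiq hzi hzq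
  have htj := (hφ _ (swap_isSwap_iff.mpr hj.symm)).eq_swap_of_apply_ne hjp hzj hzp
  have hji : swap j i = swap a i₀ := φ.injective <| by
    rw [← swap_apply_left a j, ← swap_apply_of_ne_of_ne hi hij, swap_apply_apply, map_mul,
      map_mul, map_inv, hti, htj, hp, ← swap_apply_apply, swap_apply_right,
      swap_apply_of_ne_of_ne hpq.symm hzq.symm, swap_comm]
  have := congrArg (· a) hji
  simp only [swap_apply_left, swap_apply_of_ne_of_ne hj.symm hi.symm] at this
  exact hi₀ this.symm

/-- The conjugating permutation sends `a` to the common point `c` of the transpositions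
`φ (swap a i)`, and `i` to the other point of `φ (swap a i)`. -/
theorem exists_eq_conj_of_isSwap_map [Finite α] : ∃ τ : Perm α, ∀ σ, φ σ = τ * σ * τ⁻¹ := by
  rcases isEmpty_or_nonempty α with hα | ⟨⟨a⟩⟩
  · exact ⟨1, fun σ => Subsingleton.elim _ _⟩
  obtain ⟨c, hc⟩ := exists_forall_map_swap_apply_ne φ hφ a
  set f : α → α := fun i => φ (swap a i) c with hf
  have hstar : ∀ i, φ (swap a i) = swap c (f i) := by
    intro i
    rcases eq_or_ne i a with rfl | hi
    · simp [hf, swap_self, ← Perm.one_def]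
    · exact (hφ _ (swap_isSwap_iff.mpr hi.symm)).eq_swap_apply (hc i hi)
  have hf_inj : Injective f := fun i j hij => by
    have : swap a i = swap a j := φ.injective (by rw [hstar, hstar, hij])
    simpa using congrArg (· a) this
  set τ := Equiv.ofBijective f (Finite.injective_iff_bijective.mp hf_inj)
  have hτa : τ a = c := by simp [τ, hf, swap_self, ← Perm.one_def]
  have hφτ : φ.toMonoidHom = (MulAut.conj τ).toMonoidHom := monoidHom_ext_swap a fun i => by
    change φ (swap a i) = τ * swap a i * τ⁻¹
    rw [← swap_apply_apply, hτa, hstar]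
    rfl
  exact ⟨τ, fun σ => congrArg (· σ) hφτ⟩

end SwapPreserving

end Equiv.Perm

section Projections

variable {G M₁ M₂ : Type*} [Group G] [Group M₁] [Group M₂]

theorem card_le_index_inf_comap_stabilizer {X₁ X₂ : Type*} [MulAction M₁ X₁] [MulAction M₂ X₂]
    [Finite G] (f₁ : G →* M₁) (f₂ : G →* M₂) {x₁ : X₁} {x₂ : X₂}
    (h : ∀ y₁ y₂, ∃ g, f₁ g • x₁ = y₁ ∧ f₂ g • x₂ = y₂) :
    Nat.card (X₁ × X₂) ≤ ((stabilizer M₁ x₁).comap f₁ ⊓ (stabilizer M₂ x₂).comap f₂).index := by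
  let F : G ⧸ ((stabilizer M₁ x₁).comap f₁ ⊓ (stabilizer M₂ x₂).comap f₂) → X₁ × X₂ :=
    Quotient.lift (fun g => (f₁ g • x₁, f₂ g • x₂)) fun g g' hg => by
      obtain ⟨h₁, h₂⟩ := Subgroup.mem_inf.mp (QuotientGroup.leftRel_apply.mp hg)
      rw [Subgroup.mem_comap, mem_stabilizer_iff, map_mul, map_inv, mul_smul,
        inv_smul_eq_iff] at h₁ h₂
      rw [h₁, h₂]
  refine Nat.card_le_card_of_surjective F fun ⟨y₁, y₂⟩ => ?_
  obtain ⟨g, hg₁, hg₂⟩ := h y₁ y₂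
  exact ⟨g, Prod.ext hg₁ hg₂⟩

theorem exists_smul_eq_of_map_ker_ne_bot {X₁ β : Type*} [MulAction M₁ X₁]
    [IsPretransitive M₁ X₁] (f₁ : G →* M₁) (f₂ : G →* Perm β) (hf₁ : Surjective f₁)
    (hf₂ : Surjective f₂) (hN : f₁.ker.map f₂ ≠ ⊥) (x₁ y₁ : X₁) (x₂ y₂ : β) :
    ∃ g, f₁ g • x₁ = y₁ ∧ f₂ g • x₂ = y₂ := by
  have : (f₁.ker.map f₂).Normal := f₁.normal_ker.map f₂ hf₂
  have := isPretransitive_of_normal hN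
  obtain ⟨m, hm⟩ := exists_smul_eq M₁ x₁ y₁
  obtain ⟨g₀, rfl⟩ := hf₁ m
  obtain ⟨⟨n, hn⟩, hny⟩ := exists_smul_eq (f₁.ker.map f₂) (f₂ g₀ • x₂) y₂
  obtain ⟨k, hk, rfl⟩ := Subgroup.mem_map.mp hn
  refine ⟨k * g₀, ?_, ?_⟩
  · rw [map_mul, MonoidHom.mem_ker.mp hk, one_mul, hm]
  · rw [map_mul, mul_smul]
    exact hny

theorem injective_of_map_ker_eq_bot (f₁ : G →* M₁) (f₂ : G →* M₂)
    (hf : Injective (f₁.prod f₂)) (h : f₁.ker.map f₂ = ⊥) : Injective f₁ := by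
  refine (injective_iff_map_eq_one f₁).mpr fun g hg => hf ?_
  have hg₂ : f₂ g = 1 := (f₁.ker.map_eq_bot_iff.mp h) hg
  simp [hg, hg₂]

theorem Subgroup.mem_iff_snd_eq_of_bijective {H : Subgroup (M₁ × M₂)}
    (h : Bijective ((MonoidHom.fst M₁ M₂).comp H.subtype)) (x : M₁ × M₂) :
    x ∈ H ↔
      x.2 = ((MonoidHom.snd M₁ M₂).comp H.subtype) ((MulEquiv.ofBijective _ h).symm x.1) := by
  set g := (MulEquiv.ofBijective _ h).symm x.1
  have hg : (g : M₁ × M₂).1 = x.1 := (MulEquiv.ofBijective _ h).apply_symm_apply x.1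
  constructor
  · intro hx
    have : g = ⟨x, hx⟩ := (MulEquiv.ofBijective _ h).injective (hg.trans rfl)
    rw [this]
    rfl
  · intro hx
    exact Prod.ext hg hx.symm ▸ g.2

end Projections

/-- Lemma 9 of Kulikov's paper: a subgroup `G` of `S_{N₁} × S_{N₂}` (`N₁, N₂ > 2`) with both
projections surjective and containing the pair of transpositions `((1 2), (1 2))`, whose
stabilizer of the point `(1,1)` has index `< N₁ N₂`, must have `N₁ = N₂` and be a diagonal
subgroup up to an inner automorphism of one factor. -/
theorem stmt0 (N₁ N₂ : ℕ) (h₁ : 2 < N₁) (h₂ : 2 < N₂)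
    (G : Subgroup (Equiv.Perm (Fin N₁) × Equiv.Perm (Fin N₂)))
    (hs₁ : Function.Surjective ((MonoidHom.fst (Equiv.Perm (Fin N₁)) (Equiv.Perm (Fin N₂))).comp
      G.subtype))
    (hs₂ : Function.Surjective ((MonoidHom.snd (Equiv.Perm (Fin N₁)) (Equiv.Perm (Fin N₂))).comp
      G.subtype))
    (hswap : (Equiv.swap (⟨0, by omega⟩ : Fin N₁) ⟨1, by omega⟩,
              Equiv.swap (⟨0, by omega⟩ : Fin N₂) ⟨1, by omega⟩) ∈ G)
    (hidx : (Subgroup.comap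
        ((MonoidHom.fst (Equiv.Perm (Fin N₁)) (Equiv.Perm (Fin N₂))).comp G.subtype)
        (MulAction.stabilizer (Equiv.Perm (Fin N₁)) (⟨0, by omega⟩ : Fin N₁)) ⊓
      Subgroup.comap
        ((MonoidHom.snd (Equiv.Perm (Fin N₁)) (Equiv.Perm (Fin N₂))).comp G.subtype)
        (MulAction.stabilizer (Equiv.Perm (Fin N₂)) (⟨0, by omega⟩ : Fin N₂))).index < N₁ * N₂) :
    ∃ (e : N₁ = N₂) (τ : Equiv.Perm (Fin N₂)),
      ∀ x : Equiv.Perm (Fin N₁) × Equiv.Perm (Fin N₂),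
        x ∈ G ↔ x.2 = τ * (Equiv.permCongr (finCongr e) x.1) * τ⁻¹ := by
  set p₁ := (MonoidHom.fst (Perm (Fin N₁)) (Perm (Fin N₂))).comp G.subtype
  set p₂ := (MonoidHom.snd (Perm (Fin N₁)) (Perm (Fin N₂))).comp G.subtype
  have hintrans : ¬∀ y₁ y₂, ∃ g, p₁ g • (⟨0, by omega⟩ : Fin N₁) = y₁ ∧
      p₂ g • (⟨0, by omega⟩ : Fin N₂) = y₂ := fun h =>
    (card_le_index_inf_comap_stabilizer p₁ p₂ h).not_gt (by simpa using hidx)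
  have hinj₁ : Injective p₁ := injective_of_map_ker_eq_bot p₁ p₂ G.subtype_injective <|
    by_contra fun hN => hintrans (exists_smul_eq_of_map_ker_ne_bot p₁ p₂ hs₁ hs₂ hN _ · _)
  have hinj₂ : Injective p₂ := injective_of_map_ker_eq_bot p₂ p₁
    (fun _ _ h => G.subtype_injective (Prod.ext (congrArg Prod.snd h) (congrArg Prod.fst h))) <|
    by_contra fun hN => hintrans fun y₁ y₂ =>
      (exists_smul_eq_of_map_ker_ne_bot p₂ p₁ hs₂ hs₁ hN _ y₂ _ y₁).imp fun _ => And.symm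
  set φ :=
    (MulEquiv.ofBijective p₁ ⟨hinj₁, hs₁⟩).symm.trans (MulEquiv.ofBijective p₂ ⟨hinj₂, hs₂⟩)
  obtain rfl : N₁ = N₂ := by
    have := Nat.card_congr φ.toEquiv
    rwa [Nat.card_perm, Nat.card_perm, Nat.card_fin, Nat.card_fin,
      Nat.factorial_inj (by omega)] at this
  have hmem := G.mem_iff_snd_eq_of_bijective ⟨hinj₁, hs₁⟩
  have hab : (⟨0, by omega⟩ : Fin N₁) ≠ ⟨1, by omega⟩ := by simp
  obtain ⟨τ, hτ⟩ := exists_eq_conj_of_isSwap_map φ fun s =>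
    isSwap_map_of_isSwap_map_swap φ hab (((hmem _).mp hswap) ▸ swap_isSwap_iff.mpr hab)
  exact ⟨rfl, τ, fun x => by rw [hmem, ← hτ]; rfl⟩
end

section
/- Suppose integers $d \ge 1$, $g \ge 0$, $c \ge 0$, $N_i \ge 5$ satisfy $c \le 3d + 3g - 3$ and $N_i (6d + 2(g-1) - c) \le 4(3d + g - 1)$ with $6d + 2(g-1) - c > 0$. Then $d \le 3(g-1)$. -/
/-- Theorem 12: if `c ≤ 3d + 3g - 3` and some `N ≥ 5` satisfies
`N(6d + 2(g-1) - c) ≤ 4(3d + g - 1)` with positive factor, then `d ≤ 3(g-1)`. -/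
theorem stmt16 (d g c N : ℤ) (hd : 1 ≤ d) (hg : 0 ≤ g) (hc : 0 ≤ c) (hN : 5 ≤ N)
    (hpluecker : c ≤ 3 * d + 3 * g - 3)
    (hpos : 0 < 6 * d + 2 * (g - 1) - c)
    (hfail : N * (6 * d + 2 * (g - 1) - c) ≤ 4 * (3 * d + g - 1)) :
    d ≤ 3 * (g - 1) := by
  nlinarith [mul_le_mul_of_nonneg_right hN (le_of_lt hpos)]
end
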